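/- arXiv:1405.0244 — 6 statements merged into one kernel-verified Lean document; each statement's English description precedes it below -/
import Mathlib

section
/- The group G = ∏_{n ∈ ℕ} Sym₀(ℤ), the countable direct product of copies of the group of finitely supported permutations of ℤ, contains a subgroup isomorphic to the free group F₂ on two generators. -/
/-- `Sym₀(ℤ)`: the group of permutations of `ℤ` with finite support. -/
def finSupportPerms : Subgroup (Equiv.Perm ℤ) where
  carrier := {π | {x : ℤ | π x ≠ x}.Finite}
  one_mem' := by simp
  mul_mem' := by
    intro a b ha hb
    apply Set.Finite.subset (ha.union hb)
    intro x hx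
    by_contra h
    try push_neg at h
    simp only [Set.mem_setOf_eq, Set.mem_union] at h hx
    push_neg at h
    apply hx
    simp [Equiv.Perm.mul_apply, h.2, h.1]
  inv_mem' := by
    intro a ha
    apply Set.Finite.subset (ha.image a)
    intro x hx
    simp only [Set.mem_setOf_eq] at hx
    refine ⟨a⁻¹ x, ?_, by simp⟩
    simp only [Set.mem_setOf_eq]
    rw [show a (a⁻¹ x) = x from a.apply_symm_apply x]
    exact fun h => hx h.symm

/-!
Let `σ : F₂ → Perm ℤ` be the regular representation of the (countably infinite) free group,
transported to `ℤ`. Approximate each `σ(generator)` by finitely supported permutations `π_n` that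
agree with it on `[-n, n]`; since `F₂` is free, these approximations define homomorphisms
`ρ_n : F₂ → Sym₀(ℤ)`, and `ρ_n(w) → σ(w)` pointwise for every `w`, because the `w` for which
this holds form a subgroup containing the generators. So a `w` killed by every
`ρ_n` is killed by `σ`, which is faithful.
-/

open Filter Equiv

theorem Equiv.Perm.exists_finite_support_eqOn {α : Type*} [DecidableEq α] (σ : Perm α)
    (S : Finset α) : ∃ π : Perm α, {x | π x ≠ x}.Finite ∧ ∀ x ∈ S, π x = σ x := by
  induction S using Finset.induction_on with
  | empty => exact ⟨1, by simp, by simp⟩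
  | @insert a S ha ih =>
    obtain ⟨π, hπ, hπS⟩ := ih
    set b := π⁻¹ (σ a)
    refine ⟨π * swap a b, (hπ.union (Set.toFinite {a, b})).subset fun x hx => ?_, fun x hx => ?_⟩
    · by_contra h
      simp only [Set.mem_union, Set.mem_ofPred_eq, Set.mem_insert_iff, Set.mem_singleton_iff,
        not_or, not_not] at h
      simp [swap_apply_of_ne_of_ne h.2.1 h.2.2, h.1] at hx
    · rcases Finset.mem_insert.mp hx with rfl | hxS
      · simp [b]
      · have hxa : x ≠ a := by rintro rfl; exact ha hxS
        have hxb : x ≠ b := fun h => hxa (σ.injective (by rw [← hπS x hxS, h]; simp [b]))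
        simp [swap_apply_of_ne_of_ne hxa hxb, hπS x hxS]

theorem exists_seq_finSupportPerms_eventually_eq (σ : Perm ℤ) :
    ∃ π : ℕ → finSupportPerms, ∀ x, ∀ᶠ n in atTop, (π n : Perm ℤ) x = σ x := by
  choose π hπ hπσ using fun n : ℕ => σ.exists_finite_support_eqOn (Finset.Icc (-n : ℤ) n)
  refine ⟨fun n => ⟨π n, hπ n⟩, fun x => ?_⟩
  filter_upwards [eventually_ge_atTop x.natAbs] with n hn
  exact hπσ n x (Finset.mem_Icc.mpr (by omega))

section PointwiseLimit

variable {G α ι : Type*} [Group G]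

def pointwiseLimitSubgroup (ρ : ι → G →* Perm α) (σ : G →* Perm α) (l : Filter ι) :
    Subgroup G where
  carrier := {g | ∀ x, ∀ᶠ n in l, ρ n g x = σ g x}
  one_mem' x := by simp
  mul_mem' {g h} hg hh x := by
    filter_upwards [hh x, hg (σ h x)] with n hhn hgn
    simp [Perm.mul_apply, hhn, hgn]
  inv_mem' {g} hg x := by
    filter_upwards [hg (σ g⁻¹ x)] with n hn
    rw [map_inv, Perm.inv_eq_iff_eq, hn, ← Perm.mul_apply, ← map_mul, mul_inv_cancel, map_one,
      Perm.one_apply]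

@[simp]
theorem mem_pointwiseLimitSubgroup {ρ : ι → G →* Perm α} {σ : G →* Perm α} {l : Filter ι}
    {g : G} : g ∈ pointwiseLimitSubgroup ρ σ l ↔ ∀ x, ∀ᶠ n in l, ρ n g x = σ g x :=
  Iff.rfl

theorem eq_one_of_pointwiseLimitSubgroup_eq_top {ρ : ι → G →* Perm α} {σ : G →* Perm α}
    {l : Filter ι} [l.NeBot] (hσ : Function.Injective σ) (hlim : pointwiseLimitSubgroup ρ σ l = ⊤)
    {g : G} (hg : ∀ n, ρ n g = 1) : g = 1 := by
  refine (injective_iff_map_eq_one σ).mp hσ g (Perm.ext fun x => ?_)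
  obtain ⟨n, hn⟩ := (mem_pointwiseLimitSubgroup.mp (hlim ▸ Subgroup.mem_top g) x).exists
  simpa [hg n] using hn.symm

end PointwiseLimit

theorem exists_injective_monoidHom_perm_int (G : Type*) [Group G] [Countable G] [Infinite G] :
    ∃ σ : G →* Perm ℤ, Function.Injective σ := by
  obtain ⟨e⟩ : Nonempty (G ≃ ℤ) := nonempty_equiv_of_countable
  exact ⟨e.permCongrHom.toMonoidHom.comp (MulAction.toPermHom G G),
    e.permCongrHom.injective.comp MulAction.toPerm_injective⟩

theorem FreeGroup.exists_injective_monoidHom_finSupportPerms (α : Type*) [Countable α]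
    [Nonempty α] : ∃ φ : FreeGroup α →* (ℕ → finSupportPerms), Function.Injective φ := by
  obtain ⟨σ, hσ⟩ := exists_injective_monoidHom_perm_int (FreeGroup α)
  choose a ha using fun i => exists_seq_finSupportPerms_eventually_eq (σ (of i))
  let φ := FreeGroup.lift a
  let ρ n : FreeGroup α →* Perm ℤ := finSupportPerms.subtype.comp ((Pi.evalMonoidHom _ n).comp φ)
  have hlim : pointwiseLimitSubgroup ρ σ atTop = ⊤ := by
    rw [eq_top_iff, ← FreeGroup.closure_range_of, Subgroup.closure_le]
    rintro _ ⟨i, rfl⟩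
    simpa [ρ, φ] using ha i
  refine ⟨φ, (injective_iff_map_eq_one φ).mpr fun w hw =>
    eq_one_of_pointwiseLimitSubgroup_eq_top hσ hlim fun n => ?_⟩
  simp [ρ, hw]

/-- The product `∏_{n ∈ ℕ} Sym₀(ℤ)` contains a subgroup isomorphic to the free group
on two generators. -/
theorem prod_finSupportPerms_contains_free_group_of_rank_two :
    ∃ φ : FreeGroup (Fin 2) →* (ℕ → finSupportPerms), Function.Injective φ :=
  FreeGroup.exists_injective_monoidHom_finSupportPerms (Fin 2)
end

section
/- If a class of groups C is closed under taking subgroups and unrestricted wreath products, then C satisfies the Gruenberg condition: for any chain K ⊴ H ⊴ G with G/H ∈ C and H/K ∈ C, there exists L ⊴ G with L ⊆ K and G/L ∈ C. -/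
abbrev GroupClass : Type 1 := ∀ (G : Type) [Group G], Prop

def IsoClosed (C : GroupClass) : Prop :=
  ∀ (G H : Type) [Group G] [Group H], Nonempty (G ≃* H) → C G → C H

/-- `N` is a normal subgroup with quotient in the class `C`. -/
def NormalQuotientIn (C : GroupClass) {G : Type} [Group G] (N : Subgroup G) : Prop :=
  ∃ h : N.Normal, by haveI := h; exact C (G ⧸ N)

/-- `G` is residually `C`: every nontrivial element survives in a surjective image lying in `C`. -/
def Residually (C : GroupClass) (G : Type*) [Group G] : Prop :=
  ∀ g : G, g ≠ 1 → ∃ (Q : GrpCat.{0}) (φ : G →* Q), Function.Surjective φ ∧ C Q ∧ φ g ≠ 1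

/-- The Gruenberg condition for a class of groups `C`. -/
def GruenbergCondition (C : GroupClass) : Prop :=
  ∀ (G : Type) [Group G] (H K : Subgroup G) [H.Normal] [(K.subgroupOf H).Normal],
    K ≤ H → C (G ⧸ H) → C (↥H ⧸ K.subgroupOf H) →
    ∃ L : Subgroup G, L ≤ K ∧ NormalQuotientIn C L

/-- A root class of groups. -/
def RootClass (R : GroupClass) : Prop :=
  (∃ G : GrpCat.{0}, Nontrivial G ∧ R G) ∧
  IsoClosed R ∧
  (∀ (G : Type) [Group G] (H : Subgroup G), R G → R H) ∧
  (∀ (G H : Type) [Group G] [Group H], R G → R H → R (G × H)) ∧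
  GruenbergCondition R

/-- Amenability: a finitely additive left-invariant probability measure on all subsets. -/
def IsAmenable (G : Type*) [Group G] : Prop :=
  ∃ m : Set G → ℝ,
    m Set.univ = 1 ∧
    (∀ A : Set G, 0 ≤ m A) ∧
    (∀ A B : Set G, Disjoint A B → m (A ∪ B) = m A + m B) ∧
    (∀ (g : G) (A : Set G), m ((g * ·) '' A) = m A)

def amenableClass : GroupClass := fun G inst => @IsAmenable G inst

def solvableClass : GroupClass := fun G inst => @IsSolvable G inst

/-- The shift automorphism of the unrestricted power `B → A` given by `b : B`. -/
def wreathShift (A B : Type) [Group A] [Group B] (b : B) : (B → A) ≃* (B → A) where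
  toFun f := fun x => f (b⁻¹ * x)
  invFun f := fun x => f (b * x)
  left_inv f := by ext x; simp [mul_assoc]
  right_inv f := by ext x; simp [mul_assoc]
  map_mul' f g := rfl

/-- The action of `B` on the unrestricted power `B → A` by shifting coordinates. -/
def wreathShiftHom (A B : Type) [Group A] [Group B] : B →* MulAut (B → A) where
  toFun := wreathShift A B
  map_one' := by ext f x; simp [wreathShift]
  map_mul' b₁ b₂ := by ext f x; simp [wreathShift, mul_assoc]

/-- The unrestricted (complete) wreath product `A ≀ B = (∏_{b ∈ B} A) ⋊ B`. -/
def WreathProduct (A B : Type) [Group A] [Group B] : Type :=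
  SemidirectProduct (B → A) B (wreathShiftHom A B)

instance (A B : Type) [Group A] [Group B] : Group (WreathProduct A B) :=
  inferInstanceAs (Group (SemidirectProduct (B → A) B (wreathShiftHom A B)))

/-!
By the Kaloujnine–Krasner construction, a transversal `t` of `H` in `G` gives a homomorphism
`G → H ≀ (G ⧸ H)`, `g ↦ (q ↦ t(q)⁻¹ g t(g⁻¹q), gH)`. Composing with `H → H ⧸ K` coordinatewise
yields a map into `(H ⧸ K) ≀ (G ⧸ H)`, which lies in `C`; its kernel `L` is normal with `G ⧸ L`
isomorphic to a subgroup of that wreath product. Choosing `t(H) = 1`, the coordinate of `g ∈ L`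
at the trivial coset is `g` itself, so `g ∈ K`.
-/

namespace WreathProduct

variable {A A' B : Type} [Group A] [Group A'] [Group B]

def mapLeft (f : A →* A') : WreathProduct A B →* WreathProduct A' B :=
  SemidirectProduct.map (f.compLeft B) (MonoidHom.id B) fun _ => rfl

end WreathProduct

section KrasnerKaloujnine

variable {G : Type} [Group G] (H : Subgroup G) [H.Normal]

noncomputable def normalizedTransversal (q : G ⧸ H) : G :=
  open Classical in if q = 1 then 1 else q.out

@[simp]
theorem mk_normalizedTransversal (q : G ⧸ H) : ((normalizedTransversal H q : G) : G ⧸ H) = q := by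
  unfold normalizedTransversal
  split_ifs with hq
  · simp [hq]
  · exact QuotientGroup.out_eq' q

@[simp]
theorem normalizedTransversal_one : normalizedTransversal H 1 = 1 := if_pos rfl

noncomputable def krasnerCocycle (g : G) (q : G ⧸ H) : H :=
  ⟨(normalizedTransversal H q)⁻¹ * g * normalizedTransversal H ((g : G ⧸ H)⁻¹ * q), by
    rw [← QuotientGroup.eq_one_iff]
    simp only [QuotientGroup.mk_mul, QuotientGroup.mk_inv, mk_normalizedTransversal]
    group⟩

theorem krasnerCocycle_one : krasnerCocycle H 1 = 1 := by
  ext q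
  simp [krasnerCocycle]

theorem krasnerCocycle_mul (g g' : G) (q : G ⧸ H) :
    krasnerCocycle H (g * g') q =
      krasnerCocycle H g q * krasnerCocycle H g' ((g : G ⧸ H)⁻¹ * q) := by
  ext
  simp only [krasnerCocycle, Subgroup.coe_mul, QuotientGroup.mk_mul, mul_inv_rev, mul_assoc]
  group

theorem krasnerCocycle_of_mem {g : G} (hg : g ∈ H) : krasnerCocycle H g 1 = ⟨g, hg⟩ := by
  ext
  simp [krasnerCocycle, (QuotientGroup.eq_one_iff g).mpr hg]

noncomputable def krasnerKaloujnine : G →* WreathProduct H (G ⧸ H) where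
  toFun g := ⟨krasnerCocycle H g, g⟩
  map_one' := SemidirectProduct.ext (krasnerCocycle_one H) rfl
  map_mul' g g' := SemidirectProduct.ext (funext (krasnerCocycle_mul H g g')) rfl

end KrasnerKaloujnine

theorem ker_mapLeft_comp_krasnerKaloujnine_le {G : Type} [Group G] {H K : Subgroup G} [H.Normal]
    [(K.subgroupOf H).Normal] :
    ((WreathProduct.mapLeft (QuotientGroup.mk' (K.subgroupOf H))).comp
      (krasnerKaloujnine H)).ker ≤ K := by
  intro g hg
  have hgH : g ∈ H := by
    rw [← QuotientGroup.eq_one_iff]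
    exact congrArg SemidirectProduct.right hg
  have hcoord := congrFun (congrArg SemidirectProduct.left hg) 1
  change ((krasnerCocycle H g 1 : H) : H ⧸ K.subgroupOf H) = 1 at hcoord
  rwa [krasnerCocycle_of_mem H hgH, QuotientGroup.eq_one_iff, Subgroup.mem_subgroupOf] at hcoord

theorem normalQuotientIn_ker {C : GroupClass} (hiso : IsoClosed C)
    (hsub : ∀ (G : Type) [Group G] (H : Subgroup G), C G → C H)
    {G Q : Type} [Group G] [Group Q] (φ : G →* Q) (hQ : C Q) : NormalQuotientIn C φ.ker :=
  ⟨inferInstance, hiso _ _ ⟨(QuotientGroup.quotientKerEquivRange φ).symm⟩ (hsub _ _ hQ)⟩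

/-- If a class of groups `C` is closed under isomorphism, taking subgroups and
unrestricted wreath products, then `C` satisfies the Gruenberg condition. -/
theorem gruenberg_of_closed_under_wreath (C : GroupClass)
    (hiso : IsoClosed C)
    (hsub : ∀ (G : Type) [Group G] (H : Subgroup G), C G → C H)
    (hwr : ∀ (A B : Type) [Group A] [Group B], C A → C B → C (WreathProduct A B)) :
    GruenbergCondition C := by
  intro G _ H K _ _ _ hGH hHK
  exact ⟨_, ker_mapLeft_comp_krasnerKaloujnine_le,
    normalQuotientIn_ker hiso hsub _ (hwr _ _ hHK hGH)⟩
end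

section
/- If a class of groups C satisfies the Gruenberg condition, then every (residually C)-by-C group is residually C: if N ⊴ G, N is residually C, and G/N ∈ C, then G is residually C. -/
open Function

variable {C : GroupClass}

lemma IsoClosed.quotient_ker (hiso : IsoClosed C) {G Q : Type} [Group G] [Group Q]
    {φ : G →* Q} (hφ : Surjective φ) (hQ : C Q) : C (G ⧸ φ.ker) :=
  hiso Q _ ⟨(QuotientGroup.quotientKerEquivOfSurjective φ hφ).symm⟩ hQ

lemma NormalQuotientIn.exists_surjective_apply_ne_one {G : Type} [Group G] {L : Subgroup G}
    (hL : NormalQuotientIn C L) {g : G} (hg : g ∉ L) :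
    ∃ (Q : GrpCat.{0}) (φ : G →* Q), Surjective φ ∧ C Q ∧ φ g ≠ 1 := by
  obtain ⟨_, hCL⟩ := hL
  exact ⟨GrpCat.of (G ⧸ L), QuotientGroup.mk' L, QuotientGroup.mk'_surjective L, hCL,
    fun h => hg ((QuotientGroup.eq_one_iff g).mp h)⟩

lemma GruenbergCondition.exists_le_map_subtype (hgru : GruenbergCondition C)
    (hiso : IsoClosed C) {G : Type} [Group G] (N : Subgroup G) [N.Normal] (hQ : C (G ⧸ N))
    (K : Subgroup N) [K.Normal] (hK : C (N ⧸ K)) :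
    ∃ L : Subgroup G, L ≤ K.map N.subtype ∧ NormalQuotientIn C L := by
  have hK' : (K.map N.subtype).subgroupOf N = K :=
    Subgroup.comap_map_eq_self_of_injective N.subtype_injective K
  have : ((K.map N.subtype).subgroupOf N).Normal := by rw [hK']; infer_instance
  exact hgru G N (K.map N.subtype) (Subgroup.map_subtype_le K) hQ
    (hiso _ _ ⟨QuotientGroup.quotientMulEquivOfEq hK'.symm⟩ hK)

/-- If a class of groups `C` satisfies the Gruenberg condition, then every
(residually `C`)-by-`C` group is residually `C`. -/
theorem residually_of_residually_by_C (C : GroupClass)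
    (hiso : IsoClosed C) (hgru : GruenbergCondition C)
    (G : Type) [Group G] (N : Subgroup G) [N.Normal]
    (hN : Residually C N) (hQ : C (G ⧸ N)) :
    Residually C G := by
  intro g hg
  by_cases hgN : g ∈ N
  · obtain ⟨Q, φ, hφ, hCQ, hφg⟩ := hN ⟨g, hgN⟩ (by simpa using hg)
    obtain ⟨L, hLK, hL⟩ :=
      hgru.exists_le_map_subtype hiso N hQ φ.ker (hiso.quotient_ker hφ hCQ)
    exact hL.exists_surjective_apply_ne_one fun hgL =>
      hφg ((Subgroup.mem_map_iff_mem N.subtype_injective).mp (hLK hgL))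
  · exact NormalQuotientIn.exists_surjective_apply_ne_one ⟨inferInstance, hQ⟩ hgN
end

section
/- Every virtually residually amenable group is residually amenable: if G has a finite-index subgroup H that is residually amenable, then G is residually amenable. -/
open Set Filter Topology

section FinitelyAdditive

variable {X Y : Type*}

structure IsFinAddProbability (μ : Set X → ℝ) : Prop where
  univ_eq_one : μ univ = 1
  nonneg : ∀ A, 0 ≤ μ A
  union : ∀ A B, Disjoint A B → μ (A ∪ B) = μ A + μ B

def IsSMulInvariant (G : Type*) [SMul G X] (μ : Set X → ℝ) : Prop :=
  ∀ (g : G) (A : Set X), μ ((g • ·) ⁻¹' A) = μ A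

namespace IsFinAddProbability

theorem average {ι : Type*} [Fintype ι] [Nonempty ι] {ν : ι → Set X → ℝ}
    (hν : ∀ i, IsFinAddProbability (ν i)) :
    IsFinAddProbability fun A => (∑ i, ν i A) / Fintype.card ι where
  univ_eq_one := by simp [(hν _).univ_eq_one]
  nonneg _ := div_nonneg (Finset.sum_nonneg fun i _ => (hν i).nonneg _) (Nat.cast_nonneg _)
  union A B h := by simp [(hν _).union A B h, Finset.sum_add_distrib, add_div]

variable {μ : Set X → ℝ} (hμ : IsFinAddProbability μ)
include hμ

theorem inter_add_diff (A B : Set X) : μ (A ∩ B) + μ (A \ B) = μ A := by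
  rw [← hμ.union _ _ (disjoint_sdiff_inter.symm.mono_left le_rfl), inter_union_sdiff]

theorem empty : μ ∅ = 0 := by
  simpa using hμ.inter_add_diff ∅ ∅

theorem le_one (A : Set X) : μ A ≤ 1 := by
  have := hμ.inter_add_diff univ A
  rw [univ_inter, hμ.univ_eq_one] at this
  linarith [hμ.nonneg (univ \ A)]

theorem map (p : X → Y) : IsFinAddProbability fun B : Set Y => μ (p ⁻¹' B) where
  univ_eq_one := hμ.univ_eq_one
  nonneg _ := hμ.nonneg _
  union _ _ h := hμ.union _ _ (h.preimage p)

end IsFinAddProbability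

theorem isFinAddProbability_ncard [Finite X] [Nonempty X] :
    IsFinAddProbability fun A : Set X => (A.ncard : ℝ) / Nat.card X where
  univ_eq_one := by simp [Set.ncard_univ]
  nonneg _ := by positivity
  union A B h := by rw [Set.ncard_union_eq h (toFinite A) (toFinite B)]; push_cast; ring

theorem IsSMulInvariant.map {G K : Type*} [SMul G X] [SMul K Y] {μ : Set X → ℝ}
    (hμ : IsSMulInvariant G μ) (f : K → G) (p : X → Y) (hp : ∀ k x, p (f k • x) = k • p x) :
    IsSMulInvariant K fun B : Set Y => μ (p ⁻¹' B) := by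
  intro k B
  have : p ⁻¹' ((k • ·) ⁻¹' B) = (f k • ·) ⁻¹' (p ⁻¹' B) := by
    ext x; simp [hp]
  change μ _ = μ _
  rw [this, hμ]

/-- Average the translates of `ν` over `G ⧸ H`; by `H`-invariance the translate by `g` only
depends on the coset of `g`. -/
theorem exists_isSMulInvariant_of_finiteIndex {G : Type*} [Group G] [MulAction G X]
    (H : Subgroup G) [H.FiniteIndex] {ν : Set X → ℝ} (hν : IsFinAddProbability ν)
    (hinv : IsSMulInvariant H ν) :
    ∃ μ : Set X → ℝ, IsFinAddProbability μ ∧ IsSMulInvariant G μ := by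
  have := Fintype.ofFinite (G ⧸ H)
  have translate_eq (g : G) (A : Set X) :
      ν ((g • ·) ⁻¹' A) = ν (((g : G ⧸ H).out • ·) ⁻¹' A) := by
    obtain ⟨h, hh⟩ := QuotientGroup.mk_out_eq_mul H g
    rw [hh, ← hinv h]
    congr 1
    ext x
    simp [mul_smul, Subgroup.smul_def]
  refine ⟨_, IsFinAddProbability.average (ν := fun (c : G ⧸ H) A => ν ((c.out • ·) ⁻¹' A))
    fun _ => hν.map _, fun g A => ?_⟩
  congr 1
  calc ∑ c : G ⧸ H, ν ((c.out • ·) ⁻¹' ((g • ·) ⁻¹' A))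
      = ∑ c : G ⧸ H, ν (((g • c).out • ·) ⁻¹' A) := by
        refine Finset.sum_congr rfl fun c _ => ?_
        have hc : g • c = ((g * c.out : G) : G ⧸ H) := by
          rw [← smul_eq_mul, ← MulAction.Quotient.smul_mk, QuotientGroup.out_eq']
        rw [hc, ← translate_eq]
        simp only [mul_smul]
        rfl
    _ = ∑ c : G ⧸ H, ν ((c.out • ·) ⁻¹' A) :=
        Equiv.sum_comp (MulAction.toPerm g) fun c : G ⧸ H => ν ((c.out • ·) ⁻¹' A)

end FinitelyAdditive

section Integral

variable {X Y Z : Type*}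

theorem Nat.floor_add_floor_le {a b : ℝ} (ha : 0 ≤ a) (hb : 0 ≤ b) :
    ⌊a⌋₊ + ⌊b⌋₊ ≤ ⌊a + b⌋₊ := by
  refine Nat.le_floor ?_
  push_cast
  linarith [Nat.floor_le ha, Nat.floor_le hb]

theorem Nat.floor_add_le_floor_add_floor_add_one {a b : ℝ} (ha : 0 ≤ a) (hb : 0 ≤ b) :
    ⌊a + b⌋₊ ≤ ⌊a⌋₊ + ⌊b⌋₊ + 1 := by
  refine Nat.lt_succ_iff.1 <| (Nat.floor_lt (add_nonneg ha hb)).2 ?_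
  push_cast
  linarith [Nat.lt_floor_add_one a, Nat.lt_floor_add_one b]

/-- The layer-cake formula: for `u ≤ N` this is the integral of `u`. -/
noncomputable def layerSum (μ : Set Y → ℝ) (N : ℕ) (u : Y → ℕ) : ℝ :=
  ∑ k ∈ Finset.range N, μ {y | k < u y}

noncomputable def approxIntegral (μ : Set Y → ℝ) (f : Y → ℝ) (n : ℕ) : ℝ :=
  layerSum μ n (fun y => ⌊n * f y⌋₊) / n

/-- Meant for `f : Y → [0, 1]`. The approximations lie in `[0, 1]` but are not shown to converge;
their limit along a free ultrafilter exists and is additive in `f`. -/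
noncomputable def finAddIntegral (μ : Set Y → ℝ) (f : Y → ℝ) : ℝ :=
  limUnder (Ultrafilter.of atTop : Ultrafilter ℕ) (approxIntegral μ f)

theorem tendsto_limUnder_of_forall_mem {α : Type*} (U : Ultrafilter α) {s : Set ℝ}
    (hs : IsCompact s) {a : α → ℝ} (ha : ∀ i, a i ∈ s) : Tendsto a U (𝓝 (limUnder U a)) := by
  refine tendsto_nhds_limUnder ?_
  obtain ⟨x, -, hx⟩ := hs.ultrafilter_le_nhds (U.map a) <| by
    rw [Ultrafilter.coe_map, le_principal_iff]
    exact mem_map.2 (univ_mem' ha)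
  exact ⟨x, hx⟩

theorem finAddIntegral_comp {μ : Set Y → ℝ} {ν : Set Z → ℝ} (τ : Y → Z)
    (hτ : ∀ A, μ (τ ⁻¹' A) = ν A) (f : Z → ℝ) :
    finAddIntegral μ (f ∘ τ) = finAddIntegral ν f := by
  have : approxIntegral μ (f ∘ τ) = approxIntegral ν f := by
    ext n
    simp only [approxIntegral, layerSum, Function.comp_apply]
    congr 1
    exact Finset.sum_congr rfl fun k _ => hτ {z | k < ⌊n * f z⌋₊}
  rw [finAddIntegral, this, finAddIntegral]

namespace IsFinAddProbability

variable {μ : Set Y → ℝ} (hμ : IsFinAddProbability μ)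
include hμ

theorem layerSum_mem_Icc (N : ℕ) (u : Y → ℕ) : layerSum μ N u ∈ Icc 0 (N : ℝ) := by
  refine ⟨Finset.sum_nonneg fun _ _ => hμ.nonneg _, ?_⟩
  simpa [layerSum] using
    Finset.sum_le_sum fun k (_ : k ∈ Finset.range N) => hμ.le_one {y | k < u y}

theorem layerSum_of_le {N M : ℕ} {u : Y → ℕ} (hu : ∀ y, u y ≤ N) (hNM : N ≤ M) :
    layerSum μ M u = layerSum μ N u := by
  unfold layerSum
  rw [← Finset.sum_range_add_sum_Ico _ hNM, add_eq_left]
  refine Finset.sum_eq_zero fun k hk => ?_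
  convert hμ.empty
  exact eq_empty_of_forall_notMem fun y hy => by
    have := hu y; simp only [mem_ofPred_eq, Finset.mem_Ico] at hy hk; omega

theorem layerSum_add_indicator {N : ℕ} {u : Y → ℕ} (hu : ∀ y, u y ≤ N) (A : Set Y) :
    layerSum μ (N + 1) (u + A.indicator 1) = layerSum μ N u + μ A := by
  set a : ℕ → ℝ := fun k => μ (A ∩ {y | k ≤ u y})
  have level_eq (k : ℕ) : μ {y | k < (u + A.indicator (1 : Y → ℕ)) y}
      = μ {y | k < u y} + (a k - a (k + 1)) := by
    have hsplit :
        {y | k < (u + A.indicator (1 : Y → ℕ)) y} = {y | k < u y} ∪ (A ∩ {y | u y = k}) := by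
      ext y; by_cases hy : y ∈ A <;> simp [hy]; omega
    have hdisj : Disjoint {y | k < u y} (A ∩ {y | u y = k}) :=
      disjoint_left.2 fun y hy hy' => by simp only [mem_ofPred_eq, mem_inter_iff] at hy hy'; omega
    have hstep : a k = a (k + 1) + μ (A ∩ {y | u y = k}) := by
      simp only [a]
      rw [← hμ.inter_add_diff (A ∩ {y | k ≤ u y}) {y | k < u y}]
      congr 2 <;> ext y <;> by_cases hy : y ∈ A <;> simp [hy] <;> omega
    rw [hsplit, hμ.union _ _ hdisj, hstep]
    ring
  have ha0 : a 0 = μ A := by simp [a]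
  have haN : a (N + 1) = 0 := by
    convert hμ.empty
    exact eq_empty_of_forall_notMem fun y hy => by have := hu y; simp at hy; omega
  simp only [layerSum, level_eq, Finset.sum_add_distrib, Finset.sum_range_sub', ha0, haN]
  rw [← layerSum, ← layerSum, hμ.layerSum_of_le hu N.le_succ, sub_zero]

theorem layerSum_add {N M : ℕ} {u v : Y → ℕ} (hu : ∀ y, u y ≤ N) (hv : ∀ y, v y ≤ M) :
    layerSum μ (N + M) (u + v) = layerSum μ N u + layerSum μ M v := by
  induction M generalizing v with
  | zero =>
    have : v = 0 := funext fun y => Nat.le_zero.1 (hv y)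
    simp [this, layerSum]
  | succ M ih =>
    set A := {y | 0 < v y}
    have hv' (y : Y) : v y - 1 ≤ M := by have := hv y; omega
    have hv_eq : v = (fun y => v y - 1) + A.indicator 1 := by
      ext y; by_cases hy : y ∈ A <;> simp_all [A]; omega
    have hu' (y : Y) : (u + fun y => v y - 1) y ≤ N + M := by
      have := hu y; have := hv' y; simp only [Pi.add_apply]; omega
    rw [hv_eq, ← add_assoc, ← add_assoc, hμ.layerSum_add_indicator hu',
      hμ.layerSum_add_indicator hv', ih hv']
    ring

theorem approxIntegral_mem_Icc (f : Y → ℝ) (n : ℕ) : approxIntegral μ f n ∈ Icc 0 1 := by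
  obtain ⟨h0, hn⟩ := hμ.layerSum_mem_Icc n fun y => ⌊n * f y⌋₊
  exact ⟨div_nonneg h0 n.cast_nonneg, div_le_one_of_le₀ hn n.cast_nonneg⟩

theorem approxIntegral_add_sub_mem {f g : Y → ℝ} (hf : ∀ y, 0 ≤ f y) (hg : ∀ y, 0 ≤ g y)
    (hfg : ∀ y, f y + g y ≤ 1) (n : ℕ) :
    approxIntegral μ (f + g) n - approxIntegral μ f n - approxIntegral μ g n
      ∈ Icc 0 (1 / (n : ℝ)) := by
  set u : Y → ℕ := fun y => ⌊n * f y⌋₊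
  set v : Y → ℕ := fun y => ⌊n * g y⌋₊
  set w : Y → ℕ := fun y => ⌊n * (f + g) y⌋₊
  have floor_le {x : ℝ} (hx : x ≤ 1) : ⌊n * x⌋₊ ≤ n :=
    Nat.floor_le_of_le (by nlinarith [n.cast_nonneg (α := ℝ)])
  have hw (y : Y) : u y + v y ≤ w y ∧ w y ≤ u y + v y + 1 := by
    have hfy := mul_nonneg n.cast_nonneg (hf y)
    have hgy := mul_nonneg n.cast_nonneg (hg y)
    simp only [u, v, w, Pi.add_apply, mul_add]
    exact ⟨Nat.floor_add_floor_le hfy hgy, Nat.floor_add_le_floor_add_floor_add_one hfy hgy⟩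
  set E := {y | u y + v y < w y}
  have hw_eq : w = (u + v) + E.indicator 1 := by
    ext y
    have := hw y
    by_cases hy : u y + v y < w y <;> simp [E, hy] <;> omega
  have hu (y : Y) : u y ≤ n := floor_le (by linarith [hfg y, hg y])
  have hv (y : Y) : v y ≤ n := floor_le (by linarith [hfg y, hf y])
  have huv (y : Y) : (u + v) y ≤ n + n := Nat.add_le_add (hu y) (hv y)
  have layerSum_w : layerSum μ n w = layerSum μ n u + layerSum μ n v + μ E := by
    rw [← hμ.layerSum_of_le (u := w) (fun y => floor_le (hfg y)) (by omega : n ≤ n + n + 1),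
      hw_eq, hμ.layerSum_add_indicator huv, hμ.layerSum_add hu hv]
  have : approxIntegral μ (f + g) n - approxIntegral μ f n - approxIntegral μ g n = μ E / n := by
    simp only [approxIntegral]
    rw [layerSum_w]
    ring
  rw [this]
  exact ⟨div_nonneg (hμ.nonneg E) n.cast_nonneg,
    div_le_div_of_nonneg_right (hμ.le_one E) n.cast_nonneg⟩

theorem tendsto_finAddIntegral (f : Y → ℝ) :
    Tendsto (approxIntegral μ f) (Ultrafilter.of atTop : Ultrafilter ℕ)
      (𝓝 (finAddIntegral μ f)) :=
  tendsto_limUnder_of_forall_mem _ isCompact_Icc (hμ.approxIntegral_mem_Icc f)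

theorem finAddIntegral_nonneg (f : Y → ℝ) : 0 ≤ finAddIntegral μ f :=
  ge_of_tendsto' (hμ.tendsto_finAddIntegral f) fun n => (hμ.approxIntegral_mem_Icc f n).1

theorem finAddIntegral_one : finAddIntegral μ 1 = 1 := by
  have approx_eq {n : ℕ} (hn : 1 ≤ n) : approxIntegral μ 1 n = 1 := by
    have : layerSum μ n (fun y => ⌊(n : ℝ) * (1 : Y → ℝ) y⌋₊) = n := by
      have (k : ℕ) (hk : k ∈ Finset.range n) : μ {_y : Y | k < n} = 1 := by
        simp [Finset.mem_range.1 hk, hμ.univ_eq_one]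
      simp [layerSum, Finset.sum_congr rfl this]
    rw [approxIntegral, this, div_self (by positivity)]
  refine tendsto_nhds_unique (hμ.tendsto_finAddIntegral 1) (tendsto_const_nhds.congr' ?_)
  exact Eventually.mono (Ultrafilter.of_le atTop (eventually_ge_atTop 1)) fun n hn =>
    (approx_eq hn).symm

theorem finAddIntegral_add {f g : Y → ℝ} (hf : ∀ y, 0 ≤ f y) (hg : ∀ y, 0 ≤ g y)
    (hfg : ∀ y, f y + g y ≤ 1) :
    finAddIntegral μ (f + g) = finAddIntegral μ f + finAddIntegral μ g := by
  have herr : Tendsto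
      (fun n => approxIntegral μ (f + g) n - approxIntegral μ f n - approxIntegral μ g n)
      (Ultrafilter.of atTop : Ultrafilter ℕ) (𝓝 0) :=
    (squeeze_zero (fun n => (hμ.approxIntegral_add_sub_mem hf hg hfg n).1)
      (fun n => (hμ.approxIntegral_add_sub_mem hf hg hfg n).2)
      tendsto_one_div_atTop_nhds_zero_nat).mono_left (Ultrafilter.of_le atTop)
  have hsum := ((hμ.tendsto_finAddIntegral f).add (hμ.tendsto_finAddIntegral g)).add herr
  rw [add_zero] at hsum
  exact tendsto_nhds_unique (hμ.tendsto_finAddIntegral (f + g)) (hsum.congr fun n => by ring)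

end IsFinAddProbability

noncomputable def finAddProd (μ : Set X → ℝ) (ν : Set Y → ℝ) (A : Set (X × Y)) : ℝ :=
  finAddIntegral ν fun y => μ ((·, y) ⁻¹' A)

theorem IsFinAddProbability.prod {μ : Set X → ℝ} {ν : Set Y → ℝ}
    (hμ : IsFinAddProbability μ) (hν : IsFinAddProbability ν) :
    IsFinAddProbability (finAddProd μ ν) where
  univ_eq_one := by simpa [finAddProd, hμ.univ_eq_one, Pi.one_def] using hν.finAddIntegral_one
  nonneg _ := hν.finAddIntegral_nonneg _
  union A B h := by
    have slice_union (y : Y) :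
        μ ((·, y) ⁻¹' (A ∪ B)) = μ ((·, y) ⁻¹' A) + μ ((·, y) ⁻¹' B) :=
      hμ.union _ _ (h.preimage _)
    have slice_le (y : Y) : μ ((·, y) ⁻¹' A) + μ ((·, y) ⁻¹' B) ≤ 1 :=
      slice_union y ▸ hμ.le_one _
    exact (congrArg (finAddIntegral ν) (funext slice_union)).trans
      (hν.finAddIntegral_add (fun _ => hμ.nonneg _) (fun _ => hμ.nonneg _) slice_le)

theorem IsSMulInvariant.prod {G H : Type*} [Group G] [Group H] {μ : Set G → ℝ}
    {ν : Set H → ℝ} (hμ : IsSMulInvariant G μ) (hν : IsSMulInvariant H ν) :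
    IsSMulInvariant (G × H) (finAddProd μ ν) := by
  rintro ⟨g, h⟩ A
  have : (fun y => μ ((·, y) ⁻¹' (((g, h) • ·) ⁻¹' A)))
      = (fun y => μ ((·, y) ⁻¹' A)) ∘ (h • ·) :=
    funext fun y => hμ g ((·, h • y) ⁻¹' A)
  rw [finAddProd, this, finAddIntegral_comp _ (hν h)]
  rfl

end Integral

section Amenable

variable {G K : Type*} [Group G] [Group K]

theorem isAmenable_iff_exists_isSMulInvariant :
    IsAmenable G ↔ ∃ μ : Set G → ℝ, IsFinAddProbability μ ∧ IsSMulInvariant G μ := by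
  constructor
  · rintro ⟨μ, huniv, hnonneg, hunion, hinv⟩
    refine ⟨μ, ⟨huniv, hnonneg, hunion⟩, fun g A => ?_⟩
    simpa [Set.image_mul_left] using hinv g⁻¹ A
  · rintro ⟨μ, hμ, hinv⟩
    refine ⟨μ, hμ.univ_eq_one, hμ.nonneg, hμ.union, fun g A => ?_⟩
    simpa [Set.image_mul_left] using hinv g⁻¹ A

theorem IsAmenable.of_finite [Finite G] : IsAmenable G := by
  refine isAmenable_iff_exists_isSMulInvariant.2 ⟨_, isFinAddProbability_ncard, fun g A => ?_⟩
  simp only [Set.preimage_smul, Set.ncard_smul_set]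

theorem IsAmenable.of_equivariant (hG : IsAmenable G) (f : K → G) (p : G → K)
    (hp : ∀ k x, p (f k * x) = k * p x) : IsAmenable K := by
  obtain ⟨μ, hμ, hinv⟩ := isAmenable_iff_exists_isSMulInvariant.1 hG
  exact isAmenable_iff_exists_isSMulInvariant.2 ⟨_, hμ.map p, hinv.map f p hp⟩

theorem IsAmenable.of_mulEquiv (hG : IsAmenable G) (e : G ≃* K) : IsAmenable K :=
  hG.of_equivariant e.symm e fun k x => by simp

/-- `ρ x` is a representative of the right coset `K x`, so `x ↦ x (ρ x)⁻¹` is a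
`K`-equivariant map `G → K`. -/
theorem IsAmenable.subgroup (hG : IsAmenable G) (K : Subgroup G) : IsAmenable K := by
  let ρ (x : G) : G := (Quotient.mk (QuotientGroup.rightRel K) x).out
  have hρ (x : G) : x * (ρ x)⁻¹ ∈ K :=
    QuotientGroup.rightRel_apply.1 (Quotient.mk_out (s := QuotientGroup.rightRel K) x)
  have hρ_mul (k : K) (x : G) : ρ (k * x) = ρ x :=
    congrArg Quotient.out <| Quotient.sound <| QuotientGroup.rightRel_apply.2 <| by simp
  refine hG.of_equivariant (↑) (fun x => ⟨x * (ρ x)⁻¹, hρ x⟩) fun k x => ?_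
  ext
  simp [hρ_mul, mul_assoc]

theorem IsAmenable.of_injective (hG : IsAmenable G) (f : K →* G) (hf : Function.Injective f) :
    IsAmenable K :=
  (hG.subgroup f.range).of_mulEquiv (MonoidHom.ofInjective hf).symm

theorem IsAmenable.of_finiteIndex (H : Subgroup G) [H.FiniteIndex] (hH : IsAmenable H) :
    IsAmenable G := by
  obtain ⟨ν, hν, hinv⟩ := isAmenable_iff_exists_isSMulInvariant.1 hH
  exact isAmenable_iff_exists_isSMulInvariant.2 <|
    exists_isSMulInvariant_of_finiteIndex H (hν.map Subtype.val)
      (hinv.map id Subtype.val fun _ _ => rfl)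

theorem IsAmenable.prod (hG : IsAmenable G) (hK : IsAmenable K) : IsAmenable (G × K) := by
  obtain ⟨μ, hμ, hμ_inv⟩ := isAmenable_iff_exists_isSMulInvariant.1 hG
  obtain ⟨ν, hν, hν_inv⟩ := isAmenable_iff_exists_isSMulInvariant.1 hK
  exact isAmenable_iff_exists_isSMulInvariant.2 ⟨_, hμ.prod hν, hμ_inv.prod hν_inv⟩

theorem IsAmenable.pi (hG : IsAmenable G) (ι : Type*) [Finite ι] : IsAmenable (ι → G) := by
  induction ι using Finite.induction_empty_option with
  | of_equiv e h => exact h.of_mulEquiv (MulEquiv.arrowCongr e (MulEquiv.refl G))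
  | h_empty => exact IsAmenable.of_finite
  | h_option h =>
    exact (hG.prod h).of_mulEquiv
      (MulEquiv.mk (Equiv.piOptionEquivProd (β := fun _ => G)) fun _ _ => rfl).symm

theorem IsAmenable.range_of_ker_eq {Q : Type*} [Group Q] {ψ : K →* G} {θ : K →* Q}
    (h : ψ.ker = θ.ker) (hQ : IsAmenable Q) : IsAmenable ψ.range :=
  (hQ.of_injective (QuotientGroup.kerLift θ) (QuotientGroup.kerLift_injective θ)).of_mulEquiv
    ((QuotientGroup.quotientMulEquivOfEq h).symm.trans (QuotientGroup.quotientKerEquivRange ψ))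

end Amenable

theorem Subgroup.mem_normalCore_iff_forall_out {G : Type*} [Group G] {N K : Subgroup G}
    (hN : N ≤ Subgroup.normalizer (K : Set G)) {x : G} :
    x ∈ K.normalCore ↔ ∀ c : G ⧸ N, c.out⁻¹ * x * c.out ∈ K := by
  refine ⟨fun hx c => by simpa using hx c.out⁻¹, fun hx b => ?_⟩
  obtain ⟨n, hn⟩ := QuotientGroup.mk_out_eq_mul N b⁻¹
  have := (mem_normalizer_iff.1 (hN n.2) _).1 (hx (b⁻¹ : G))
  simpa [hn, mul_assoc] using this

theorem IsAmenable.quotient_normalCore_map_ker {G Q : Type*} [Group G] [Group Q]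
    {N : Subgroup G} [N.Normal] [N.FiniteIndex] (φ : N →* Q) (hQ : IsAmenable Q) :
    IsAmenable (G ⧸ (φ.ker.map N.subtype).normalCore) := by
  set K := φ.ker.map N.subtype
  set π := QuotientGroup.mk' K.normalCore
  let θ : N →* (G ⧸ N → Q) :=
    MonoidHom.pi fun c => φ.comp (MulAut.conjNormal c.out⁻¹).toMonoidHom
  have hN : N ≤ Subgroup.normalizer (K : Set G) := by
    refine Subgroup.le_normalizer_iff.2 fun n hn k hk => ?_
    obtain ⟨m, hm, rfl⟩ := hk
    exact ⟨⟨n, hn⟩ * m * ⟨n, hn⟩⁻¹, φ.normal_ker.conj_mem m hm _, rfl⟩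
  have mem_K (m : N) : (m : G) ∈ K ↔ φ m = 1 := Subgroup.mem_map_iff_mem N.subtype_injective
  have hker : (π.comp N.subtype).ker = θ.ker := by
    ext n
    rw [MonoidHom.mem_ker, MonoidHom.mem_ker, MonoidHom.comp_apply, Subgroup.subtype_apply,
      QuotientGroup.mk'_apply, QuotientGroup.eq_one_iff,
      Subgroup.mem_normalCore_iff_forall_out hN, funext_iff]
    refine forall_congr' fun c => ?_
    have hconj : c.out⁻¹ * n * c.out = (MulAut.conjNormal c.out⁻¹ n : G) := by simp
    rw [hconj, mem_K]
    rfl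
  have : (N.map π).FiniteIndex := ⟨ne_zero_of_dvd_ne_zero Subgroup.FiniteIndex.index_ne_zero
    (Subgroup.index_map_dvd N (QuotientGroup.mk'_surjective _))⟩
  refine IsAmenable.of_finiteIndex (N.map π) ?_
  rw [← Subgroup.range_subtype N, ← MonoidHom.range_comp]
  exact IsAmenable.range_of_ker_eq hker (hQ.pi _)

theorem Residually.of_injective {C : GroupClass}
    (hC : ∀ (G : Type) [Group G] (H : Subgroup G), C G → C H) {G K : Type*} [Group G]
    [Group K] (f : K →* G) (hf : Function.Injective f) (hG : Residually C G) :
    Residually C K := by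
  intro k hk
  obtain ⟨Q, φ, -, hQ, hφ⟩ := hG (f k) ((map_ne_one_iff f hf).2 hk)
  let ψ := φ.comp f
  exact ⟨GrpCat.of ψ.range, ψ.rangeRestrict, ψ.rangeRestrict_surjective, hC Q ψ.range hQ,
    fun h => hφ (congrArg Subtype.val h)⟩

theorem residually_of_forall_exists_normalQuotientIn {C : GroupClass} {G : Type} [Group G]
    (h : ∀ g : G, g ≠ 1 → ∃ L : Subgroup G, NormalQuotientIn C L ∧ g ∉ L) :
    Residually C G := by
  intro g hg
  obtain ⟨L, ⟨hL, hCL⟩, hgL⟩ := h g hg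
  exact ⟨GrpCat.of (G ⧸ L), QuotientGroup.mk' L, QuotientGroup.mk'_surjective L, hCL,
    fun h1 => hgL ((QuotientGroup.eq_one_iff g).1 h1)⟩

/-- Every virtually residually amenable group is residually amenable: if `G` has a
finite-index subgroup that is residually amenable, then `G` is residually amenable. -/
theorem residuallyAmenable_of_virtually_residuallyAmenable
    (G : Type) [Group G] (H : Subgroup G) (hfi : H.FiniteIndex)
    (hH : Residually amenableClass H) :
    Residually amenableClass G := by
  set N := H.normalCore
  have hN : Residually amenableClass N :=
    hH.of_injective (fun _ _ K hA => IsAmenable.subgroup hA K)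
      (Subgroup.inclusion H.normalCore_le) (Subgroup.inclusion_injective _)
  refine residually_of_forall_exists_normalQuotientIn fun g hg => ?_
  by_cases hgN : g ∈ N
  · obtain ⟨Q, φ, -, hQ, hφg⟩ := hN ⟨g, hgN⟩ (by simpa using hg)
    refine ⟨_, ⟨Subgroup.normalCore_normal _, IsAmenable.quotient_normalCore_map_ker φ hQ⟩,
      fun hg' => hφg ?_⟩
    exact (Subgroup.mem_map_iff_mem (x := ⟨g, hgN⟩) N.subtype_injective).1
      (Subgroup.normalCore_le _ hg')
  · exact ⟨N, ⟨inferInstance, IsAmenable.of_finite⟩, hgN⟩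
end

section
/- Every (residually solvable)-by-amenable group is residually amenable: if N ⊴ G, N is residually solvable, and G/N is amenable, then G is residually amenable. -/
/-!
If `g ∉ N`, the quotient `G ⧸ N` already separates `g` from `1`. If `g ∈ N`, residual
solvability of `N` puts `g` outside some term `N⁽ⁿ⁾` of the derived series of `N`; being
characteristic in `N`, it is normal in `G`, and `G ⧸ N⁽ⁿ⁾` is an extension of the solvable
group `N ⧸ N⁽ⁿ⁾` by the amenable group `G ⧸ N`.

Amenability of solvable groups and of extensions is proved from the definition. An abelian
group has an invariant mean by the Markov–Kakutani argument: the Cesàro averages over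
translates commute, so their images of the compact set of means have the finite intersection
property, and a common point is invariant up to an arbitrarily small error. For an extension,
a mean on `G` is obtained by integrating the translates of an invariant mean of `N` to the
cosets against an invariant mean of `G ⧸ N`; the integral of a `[0, 1]`-valued function
against a finitely additive probability is the limit of its lower dyadic sums, which are
computed by the layer-cake formula.
-/

open Set Pointwise Filter Topology

structure IsMean {Q : Type*} (m : Set Q → ℝ) : Prop where
  univ : m univ = 1
  nonneg : ∀ A, 0 ≤ m A
  union : ∀ A B, Disjoint A B → m (A ∪ B) = m A + m B

namespace IsMean

variable {Q : Type*} {m : Set Q → ℝ}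

theorem empty (hm : IsMean m) : m ∅ = 0 := by
  have := hm.union ∅ ∅ (disjoint_empty _)
  rw [union_empty] at this
  linarith

theorem mono (hm : IsMean m) {A B : Set Q} (h : A ⊆ B) : m A ≤ m B := by
  rw [← union_sdiff_cancel h, hm.union _ _ disjoint_sdiff_right]
  linarith [hm.nonneg (B \ A)]

theorem le_one (hm : IsMean m) (A : Set Q) : m A ≤ 1 :=
  hm.univ ▸ hm.mono (subset_univ A)

theorem map (hm : IsMean m) {X : Type*} (f : Q → X) :
    IsMean fun A : Set X => m (f ⁻¹' A) where
  univ := hm.univ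
  nonneg _ := hm.nonneg _
  union A B h := by rw [preimage_union]; exact hm.union _ _ (h.preimage f)

theorem dirac (x : Q) : IsMean fun A : Set Q => A.indicator 1 x where
  univ := by simp
  nonneg A := indicator_nonneg (fun _ _ => zero_le_one) x
  union A B h := by rw [indicator_union_of_disjoint h]

theorem sum_measure_inter_level (hm : IsMean m) (A : Set Q) (k : Q → ℕ) (K : ℕ) :
    ∑ j ∈ Finset.range K, m (A ∩ {q | k q = j}) = m (A ∩ {q | k q < K}) := by
  induction K with
  | zero => simp [hm.empty]
  | succ K ih =>
    rw [Finset.sum_range_succ, ih, ← hm.union]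
    · rw [← inter_union_distrib_left]
      congr 2
      ext q
      simp only [mem_union, mem_ofPred_eq]
      omega
    · exact disjoint_left.2 fun q hq hq' => (Nat.ne_of_lt hq.2) hq'.2

end IsMean

section Integration

variable {Q : Type*} {m : Set Q → ℝ}

/-- The layer-cake formula for the integral of `k : Q → ℕ` against `m`, valid only when `k ≤ K`. -/
def natIntegral (m : Set Q → ℝ) (K : ℕ) (k : Q → ℕ) : ℝ :=
  ∑ j ∈ Finset.range K, m {q | j < k q}

theorem natIntegral_nonneg (hm : IsMean m) (K : ℕ) (k : Q → ℕ) : 0 ≤ natIntegral m K k :=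
  Finset.sum_nonneg fun _ _ => hm.nonneg _

theorem natIntegral_mono (hm : IsMean m) (K : ℕ) {k l : Q → ℕ} (hkl : k ≤ l) :
    natIntegral m K k ≤ natIntegral m K l :=
  Finset.sum_le_sum fun _ _ => hm.mono fun q hq => lt_of_lt_of_le hq (hkl q)

theorem natIntegral_comp (K : ℕ) (k : Q → ℕ) {τ : Q → Q} (hτ : ∀ A, m (τ ⁻¹' A) = m A) :
    natIntegral m K (k ∘ τ) = natIntegral m K k :=
  Finset.sum_congr rfl fun j _ => hτ {q | j < k q}

theorem natIntegral_congr_bound (hm : IsMean m) {K L : ℕ} {k : Q → ℕ} (hk : ∀ q, k q ≤ K)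
    (hKL : K ≤ L) : natIntegral m L k = natIntegral m K k := by
  refine (Finset.sum_subset (Finset.range_subset_range.2 hKL) fun j _ hj => ?_).symm
  have hempty : {q | j < k q} = ∅ :=
    eq_empty_of_forall_notMem fun q hq => hj (Finset.mem_range.2 (lt_of_lt_of_le hq (hk q)))
  rw [hempty, hm.empty]

theorem natIntegral_add_indicator (hm : IsMean m) {K : ℕ} (k : Q → ℕ) {A : Set Q}
    (hA : ∀ q ∈ A, k q < K) : natIntegral m K (k + A.indicator 1) = natIntegral m K k + m A := by
  have hlevel : ∀ j,
      {q | j < (k + A.indicator 1 : Q → ℕ) q} = {q | j < k q} ∪ (A ∩ {q | k q = j}) := by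
    intro j
    ext q
    by_cases hq : q ∈ A <;> simp [hq]; omega
  have hdisj : ∀ j, Disjoint {q | j < k q} (A ∩ {q | k q = j}) := fun j =>
    disjoint_left.2 fun q hq hq' => (Nat.ne_of_gt hq) hq'.2
  have hAK : A ∩ {q | k q < K} = A := inter_eq_left.2 hA
  rw [natIntegral, Finset.sum_congr rfl fun j _ => (hlevel j ▸ hm.union _ _ (hdisj j)),
    Finset.sum_add_distrib, hm.sum_measure_inter_level, hAK]
  rfl

theorem natIntegral_add (hm : IsMean m) {K : ℕ} (k l : Q → ℕ) (hkl : ∀ q, k q + l q ≤ K) :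
    natIntegral m K (k + l) = natIntegral m K k + natIntegral m K l := by
  have htrunc : ∀ i, natIntegral m K (k + fun q => min (l q) i) =
      natIntegral m K k + ∑ j ∈ Finset.range i, m {q | j < l q} := by
    intro i
    induction i with
    | zero => simp only [Nat.min_zero, Finset.range_zero, Finset.sum_empty, add_zero]; rfl
    | succ i ih =>
      have hstep : (k + fun q => min (l q) (i + 1)) =
          (k + fun q => min (l q) i) + {q | i < l q}.indicator 1 := by
        funext q
        by_cases hq : i < l q <;> simp [hq] <;> omega
      have hbound : ∀ q ∈ {q | i < l q}, (k + fun q => min (l q) i) q < K := fun q hq => by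
        have := hkl q; simp only [Pi.add_apply, mem_ofPred_eq] at hq ⊢; omega
      rw [hstep, natIntegral_add_indicator hm _ hbound, ih, Finset.sum_range_succ, add_assoc]
  have hl : (fun q => min (l q) K) = l := funext fun q => min_eq_left (by have := hkl q; omega)
  rw [← hl, htrunc, hl]
  rfl

theorem natIntegral_const (hm : IsMean m) {K c : ℕ} (hc : c ≤ K) :
    natIntegral m K (fun _ => c) = c := by
  induction c with
  | zero => simp [natIntegral, hm.empty]
  | succ c ih =>
    have hsucc : (fun _ : Q => c + 1) = (fun _ => c) + (univ : Set Q).indicator 1 := by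
      funext q; simp
    rw [hsucc, natIntegral_add_indicator hm _ fun _ _ => hc, ih (by omega), hm.univ]
    push_cast; rfl

theorem Nat.floor_add_floor_le_s8 {x y : ℝ} (hx : 0 ≤ x) (hy : 0 ≤ y) :
    ⌊x⌋₊ + ⌊y⌋₊ ≤ ⌊x + y⌋₊ :=
  Nat.le_floor (by push_cast; linarith [Nat.floor_le hx, Nat.floor_le hy])

theorem Nat.floor_add_le_floor_add_floor_add_one_s8 {x y : ℝ} (hx : 0 ≤ x) (hy : 0 ≤ y) :
    ⌊x + y⌋₊ ≤ ⌊x⌋₊ + ⌊y⌋₊ + 1 := by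
  have : ⌊x + y⌋₊ < ⌊x⌋₊ + ⌊y⌋₊ + 2 := (Nat.floor_lt (add_nonneg hx hy)).2 <| by
    push_cast; linarith [Nat.lt_floor_add_one x, Nat.lt_floor_add_one y]
  omega

theorem floor_two_pow_mul_le (n : ℕ) {x : ℝ} (hx : x ≤ 1) : ⌊2 ^ n * x⌋₊ ≤ 2 ^ n :=
  Nat.floor_le_of_le (by push_cast; nlinarith [pow_pos (two_pos (α := ℝ)) n])

/-- The bound `2 ^ n + 1` leaves room for the rounding error in `dyadicSum_add_le`. -/
noncomputable def dyadicSum (m : Set Q → ℝ) (n : ℕ) (u : Q → ℝ) : ℝ :=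
  natIntegral m (2 ^ n + 1) (fun q => ⌊2 ^ n * u q⌋₊) / 2 ^ n

theorem dyadicSum_nonneg (hm : IsMean m) (n : ℕ) (u : Q → ℝ) : 0 ≤ dyadicSum m n u :=
  div_nonneg (natIntegral_nonneg hm _ _) (by positivity)

theorem dyadicSum_le_one (hm : IsMean m) (n : ℕ) {u : Q → ℝ} (hu : u ≤ 1) :
    dyadicSum m n u ≤ 1 := by
  have hle : natIntegral m (2 ^ n + 1) (fun q => ⌊2 ^ n * u q⌋₊) ≤ 2 ^ n := by
    calc _ ≤ natIntegral m (2 ^ n + 1) (fun _ => 2 ^ n) :=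
          natIntegral_mono hm _ fun q => floor_two_pow_mul_le n (hu q)
      _ = 2 ^ n := by rw [natIntegral_const hm (Nat.le_succ _)]; push_cast; rfl
  exact (div_le_one (by positivity)).2 hle

theorem dyadicSum_le_succ (hm : IsMean m) (n : ℕ) {u : Q → ℝ} (hu₀ : 0 ≤ u)
    (hu₁ : u ≤ 1) :
    dyadicSum m n u ≤ dyadicSum m (n + 1) u := by
  set a : Q → ℕ := fun q => ⌊2 ^ n * u q⌋₊
  have ha : ∀ q, a q ≤ 2 ^ n := fun q => floor_two_pow_mul_le n (hu₁ q)
  have hdouble : a + a ≤ fun q => ⌊2 ^ (n + 1) * u q⌋₊ := fun q => by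
    have hx : (0 : ℝ) ≤ 2 ^ n * u q := mul_nonneg (by positivity) (hu₀ q)
    calc (a + a) q ≤ ⌊2 ^ n * u q + 2 ^ n * u q⌋₊ := Nat.floor_add_floor_le_s8 hx hx
      _ = ⌊2 ^ (n + 1) * u q⌋₊ := by rw [pow_succ]; ring_nf
  calc dyadicSum m n u = natIntegral m (2 ^ (n + 1) + 1) (a + a) / 2 ^ (n + 1) := by
        rw [natIntegral_add hm _ _ fun q => by have := ha q; rw [pow_succ]; omega,
          natIntegral_congr_bound hm (fun q => (ha q).trans (Nat.le_succ _))
            (by rw [pow_succ]; omega), dyadicSum, pow_succ]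
        ring
    _ ≤ dyadicSum m (n + 1) u :=
        div_le_div_of_nonneg_right (natIntegral_mono hm _ hdouble) (by positivity)

theorem dyadicSum_one (hm : IsMean m) (n : ℕ) : dyadicSum m n 1 = 1 := by
  have hfloor : (fun q => ⌊2 ^ n * (1 : Q → ℝ) q⌋₊) = fun _ => 2 ^ n := by
    funext q
    rw [Pi.one_apply, mul_one, ← Nat.cast_ofNat, ← Nat.cast_pow, Nat.floor_natCast]
  rw [dyadicSum, hfloor, natIntegral_const hm (Nat.le_succ _)]
  push_cast
  exact div_self (by positivity)

theorem dyadicSum_comp (n : ℕ) (u : Q → ℝ) {τ : Q → Q} (hτ : ∀ A, m (τ ⁻¹' A) = m A) :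
    dyadicSum m n (u ∘ τ) = dyadicSum m n u :=
  congrArg (· / _) (natIntegral_comp _ (fun q => ⌊2 ^ n * u q⌋₊) hτ)

theorem add_dyadicSum_le (hm : IsMean m) (n : ℕ) {u v : Q → ℝ} (hu : 0 ≤ u) (hv : 0 ≤ v)
    (huv : u + v ≤ 1) : dyadicSum m n u + dyadicSum m n v ≤ dyadicSum m n (u + v) := by
  have hpow : (0 : ℝ) ≤ 2 ^ n := by positivity
  have hab : (fun q => ⌊2 ^ n * u q⌋₊) + (fun q => ⌊2 ^ n * v q⌋₊) ≤
      fun q => ⌊2 ^ n * (u + v) q⌋₊ := fun q => by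
    simpa only [Pi.add_apply, mul_add] using
      Nat.floor_add_floor_le_s8 (mul_nonneg hpow (hu q)) (mul_nonneg hpow (hv q))
  have hbound : ∀ q, ⌊2 ^ n * u q⌋₊ + ⌊2 ^ n * v q⌋₊ ≤ 2 ^ n + 1 := fun q =>
    ((hab q).trans (floor_two_pow_mul_le n (huv q))).trans (Nat.le_succ _)
  rw [dyadicSum, dyadicSum, ← add_div, ← natIntegral_add hm _ _ hbound]
  exact div_le_div_of_nonneg_right (natIntegral_mono hm _ hab) hpow

theorem dyadicSum_add_le (hm : IsMean m) (n : ℕ) {u v : Q → ℝ} (hu : 0 ≤ u) (hv : 0 ≤ v)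
    (huv : u + v ≤ 1) :
    dyadicSum m n (u + v) ≤ dyadicSum m n u + dyadicSum m n v + (1 / 2) ^ n := by
  have hpow : (0 : ℝ) ≤ 2 ^ n := by positivity
  set a : Q → ℕ := fun q => ⌊2 ^ n * u q⌋₊
  set b : Q → ℕ := fun q => ⌊2 ^ n * v q⌋₊
  have hc : (fun q => ⌊2 ^ n * (u + v) q⌋₊) ≤ a + b + fun _ => 1 := fun q => by
    simpa only [Pi.add_apply, mul_add] using
      Nat.floor_add_le_floor_add_floor_add_one_s8 (mul_nonneg hpow (hu q)) (mul_nonneg hpow (hv q))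
  have hab : ∀ q, a q + b q ≤ 2 ^ n := fun q => by
    have h := floor_two_pow_mul_le n (huv q)
    rw [Pi.add_apply, mul_add] at h
    exact (Nat.floor_add_floor_le_s8 (mul_nonneg hpow (hu q)) (mul_nonneg hpow (hv q))).trans h
  calc dyadicSum m n (u + v) ≤ natIntegral m (2 ^ n + 1) (a + b + fun _ => 1) / 2 ^ n :=
        div_le_div_of_nonneg_right (natIntegral_mono hm _ hc) hpow
    _ = dyadicSum m n u + dyadicSum m n v + (1 / 2) ^ n := by
      rw [natIntegral_add hm _ _ fun q => by have := hab q; simp only [Pi.add_apply]; omega,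
        natIntegral_add hm _ _ fun q => by have := hab q; omega,
        natIntegral_const hm (Nat.le_add_left 1 _), dyadicSum, dyadicSum, one_div_pow]
      push_cast
      ring

/-- The integral of `u : Q → [0, 1]` against a mean `m`; a junk value for other `u`. -/
noncomputable def meanIntegral (m : Set Q → ℝ) (u : Q → ℝ) : ℝ :=
  ⨆ n, dyadicSum m n u

theorem tendsto_dyadicSum (hm : IsMean m) {u : Q → ℝ} (hu₀ : 0 ≤ u) (hu₁ : u ≤ 1) :
    Tendsto (fun n => dyadicSum m n u) atTop (𝓝 (meanIntegral m u)) :=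
  tendsto_atTop_ciSup (monotone_nat_of_le_succ fun n => dyadicSum_le_succ hm n hu₀ hu₁)
    ⟨1, forall_mem_range.2 fun n => dyadicSum_le_one hm n hu₁⟩

theorem meanIntegral_nonneg (hm : IsMean m) (u : Q → ℝ) : 0 ≤ meanIntegral m u :=
  Real.iSup_nonneg fun n => dyadicSum_nonneg hm n u

theorem meanIntegral_one (hm : IsMean m) : meanIntegral m 1 = 1 := by
  simp only [meanIntegral, dyadicSum_one hm, ciSup_const]

theorem meanIntegral_comp (u : Q → ℝ) {τ : Q → Q} (hτ : ∀ A, m (τ ⁻¹' A) = m A) :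
    meanIntegral m (u ∘ τ) = meanIntegral m u :=
  iSup_congr fun n => dyadicSum_comp n u hτ

theorem meanIntegral_add (hm : IsMean m) {u v : Q → ℝ} (hu : 0 ≤ u) (hv : 0 ≤ v)
    (huv : u + v ≤ 1) : meanIntegral m (u + v) = meanIntegral m u + meanIntegral m v := by
  have hu₁ : u ≤ 1 := le_trans (le_add_of_nonneg_right hv) huv
  have hv₁ : v ≤ 1 := le_trans (le_add_of_nonneg_left hu) huv
  have hsum := (tendsto_dyadicSum hm hu hu₁).add (tendsto_dyadicSum hm hv hv₁)
  have herror : Tendsto (fun n => ((1 : ℝ) / 2) ^ n) atTop (𝓝 0) :=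
    tendsto_pow_atTop_nhds_zero_of_lt_one (by norm_num) (by norm_num)
  refine le_antisymm ?_ ?_
  · simpa only [add_zero] using
      le_of_tendsto_of_tendsto' (tendsto_dyadicSum hm (add_nonneg hu hv) huv)
        (hsum.add herror) fun n => dyadicSum_add_le hm n hu hv huv
  · exact le_of_tendsto_of_tendsto' hsum (tendsto_dyadicSum hm (add_nonneg hu hv) huv)
      fun n => add_dyadicSum_le hm n hu hv huv

theorem IsMean.meanIntegral {X : Type*} {μ : Set Q → ℝ} (hμ : IsMean μ)
    {ν : Q → Set X → ℝ} (hν : ∀ q, IsMean (ν q)) :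
    IsMean fun A => meanIntegral μ fun q => ν q A where
  univ := by simp only [(hν _).univ]; exact meanIntegral_one hμ
  nonneg _ := meanIntegral_nonneg hμ _
  union A B h := by
    simp only [(hν _).union A B h]
    exact meanIntegral_add hμ (fun q => (hν q).nonneg A) (fun q => (hν q).nonneg B)
      fun q => show ν q A + ν q B ≤ 1 from (hν q).union A B h ▸ (hν q).le_one _

end Integration

theorem isAmenable_iff {G : Type*} [Group G] :
    IsAmenable G ↔ ∃ m : Set G → ℝ, IsMean m ∧ ∀ (g : G) (A : Set G), m (g • A) = m A :=
  ⟨fun ⟨m, h₁, h₂, h₃, h₄⟩ => ⟨m, ⟨h₁, h₂, h₃⟩, h₄⟩,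
    fun ⟨m, hm, h⟩ => ⟨m, hm.1, hm.2, hm.3, h⟩⟩

theorem IsAmenable.of_surjective {G H : Type*} [Group G] [Group H] {f : G →* H}
    (hf : Function.Surjective f) (hG : IsAmenable G) : IsAmenable H := by
  obtain ⟨m, hm, hinv⟩ := isAmenable_iff.1 hG
  refine isAmenable_iff.2 ⟨_, hm.map f, fun h A => ?_⟩
  obtain ⟨g, rfl⟩ := hf h
  have hpre : f ⁻¹' (f g • A) = g • f ⁻¹' A := by
    ext x
    simp [mem_smul_set_iff_inv_smul_mem]
  simp only [hpre, hinv]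

theorem preimage_mul_coe_eq_smul {G : Type*} [Group G] {H : Subgroup G} {x y : G}
    (hxy : x⁻¹ * y ∈ H) (A : Set G) :
    (fun h : H => x * h) ⁻¹' A = (⟨x⁻¹ * y, hxy⟩ : H) • (fun h : H => y * h) ⁻¹' A := by
  ext h
  simp [mem_smul_set_iff_inv_smul_mem, mul_assoc]

theorem isAmenable_of_extension {G : Type*} [Group G] (N : Subgroup G) [N.Normal]
    (hN : IsAmenable N) (hQ : IsAmenable (G ⧸ N)) : IsAmenable G := by
  obtain ⟨mN, hmN, hNinv⟩ := isAmenable_iff.1 hN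
  obtain ⟨mQ, hmQ, hQinv⟩ := isAmenable_iff.1 hQ
  let ν : G ⧸ N → Set G → ℝ := fun q A => mN ((fun h : N => q.out * h) ⁻¹' A)
  have hν : ∀ (x : G) A, ν x A = mN ((fun h : N => x * h) ⁻¹' A) := fun x A => by
    show mN ((fun h : N => (x : G ⧸ N).out * h) ⁻¹' A) = _
    rw [preimage_mul_coe_eq_smul (QuotientGroup.eq.1 (QuotientGroup.out_eq' (x : G ⧸ N))) A,
      hNinv]
  refine isAmenable_iff.2 ⟨fun A => meanIntegral mQ fun q => ν q A,
    hmQ.meanIntegral fun q => hmN.map fun h : N => q.out * h, fun g A => ?_⟩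
  have hshift : (fun q => ν q (g • A)) = (fun q => ν q A) ∘ ((g : G ⧸ N)⁻¹ • ·) := by
    funext q
    have hq : (g : G ⧸ N)⁻¹ • q = ((g⁻¹ * q.out : G) : G ⧸ N) := by
      rw [QuotientGroup.mk_mul, QuotientGroup.mk_inv, QuotientGroup.out_eq', smul_eq_mul]
    simp only [Function.comp_apply, hq, hν, ν]
    congr 1
    ext h
    simp [mem_smul_set_iff_inv_smul_mem, mul_assoc]
  show meanIntegral mQ (fun q => ν q (g • A)) = meanIntegral mQ fun q => ν q A
  rw [hshift, meanIntegral_comp _ fun S => by rw [preimage_smul_inv, hQinv]]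

section average

variable {G : Type*} [Group G]

noncomputable def average (g : G) (n : ℕ) (m : Set G → ℝ) : Set G → ℝ :=
  fun A => (∑ i ∈ Finset.range (n + 1), m (g ^ i • A)) / (n + 1)

theorem continuous_average (g : G) (n : ℕ) : Continuous (average g n) := by
  unfold average
  fun_prop

theorem isMean_average {m : Set G → ℝ} (hm : IsMean m) (g : G) (n : ℕ) :
    IsMean (average g n m) where
  univ := by
    simp only [average, smul_set_univ, hm.univ, Finset.sum_const, Finset.card_range,
      nsmul_eq_mul, mul_one]
    push_cast
    exact div_self (by positivity)
  nonneg _ := div_nonneg (Finset.sum_nonneg fun _ _ => hm.nonneg _) (by positivity)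
  union A B h := by
    simp only [average, smul_set_union, ← add_div, ← Finset.sum_add_distrib]
    congr 1
    exact Finset.sum_congr rfl fun i _ => hm.union _ _ (disjoint_smul_set.2 h)

theorem average_comm {g h : G} (hgh : Commute g h) (n k : ℕ) (m : Set G → ℝ) :
    average g n (average h k m) = average h k (average g n m) := by
  funext A
  simp only [average, ← Finset.sum_div, smul_smul]
  rw [div_div, div_div, mul_comm ((k : ℝ) + 1), Finset.sum_comm]
  congr 1
  exact Finset.sum_congr rfl fun j _ => Finset.sum_congr rfl fun i _ => by
    rw [(hgh.pow_pow i j).eq]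

theorem abs_average_smul_sub_le {m : Set G → ℝ} (hm : IsMean m) (g : G) (n : ℕ)
    (A : Set G) : |average g n m (g • A) - average g n m A| ≤ 1 / (n + 1) := by
  have htelescope : average g n m (g • A) - average g n m A =
      (m (g ^ (n + 1) • A) - m A) / (n + 1) := by
    simp only [average, smul_smul, ← pow_succ, ← sub_div, ← Finset.sum_sub_distrib]
    rw [Finset.sum_range_sub (fun i => m (g ^ i • A)), pow_zero, one_smul]
  rw [htelescope, abs_div, abs_of_pos (by positivity : (0 : ℝ) < n + 1)]
  gcongr
  exact abs_sub_le_iff.2 ⟨by linarith [hm.le_one (g ^ (n + 1) • A), hm.nonneg A],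
    by linarith [hm.nonneg (g ^ (n + 1) • A), hm.le_one A]⟩

end average

theorem isCompact_setOf_isMean (Q : Type*) : IsCompact {m : Set Q → ℝ | IsMean m} := by
  have hclosed : IsClosed {m : Set Q → ℝ | IsMean m} := by
    have hinter : {m : Set Q → ℝ | IsMean m} = {m | m univ = 1} ∩ (⋂ A, {m | 0 ≤ m A}) ∩
        ⋂ A, ⋂ B, ⋂ (_ : Disjoint A B), {m | m (A ∪ B) = m A + m B} := by
      ext m
      simp only [mem_inter_iff, mem_iInter, mem_ofPred_eq]
      exact ⟨fun h => ⟨⟨h.1, h.2⟩, h.3⟩, fun ⟨⟨h₁, h₂⟩, h₃⟩ => ⟨h₁, h₂, h₃⟩⟩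
    rw [hinter]
    refine ((isClosed_eq (continuous_apply _) continuous_const).inter
      (isClosed_iInter fun A => isClosed_le continuous_const (continuous_apply A))).inter
      (isClosed_iInter fun A => isClosed_iInter fun B => isClosed_iInter fun _ => ?_)
    exact isClosed_eq (continuous_apply _) ((continuous_apply A).add (continuous_apply B))
  exact (isCompact_univ_pi fun _ => isCompact_Icc).of_isClosed_subset hclosed
    fun m hm A _ => ⟨hm.nonneg A, hm.le_one A⟩

theorem exists_isMean_forall_mem_image_average {G : Type*} [CommGroup G]
    (u : Finset (G × ℕ)) :
    ∃ m, IsMean m ∧ ∀ p ∈ u, m ∈ average p.1 p.2 '' {m | IsMean m} := by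
  classical
  induction u using Finset.induction with
  | empty => exact ⟨_, IsMean.dirac 1, by simp⟩
  | insert p u _ ih =>
    obtain ⟨m, hm, hmu⟩ := ih
    refine ⟨average p.1 p.2 m, isMean_average hm _ _,
      (Finset.forall_mem_insert _ _ _).2 ⟨⟨m, hm, rfl⟩, ?_⟩⟩
    rintro q hq
    obtain ⟨m', hm', rfl⟩ := hmu q hq
    exact ⟨average p.1 p.2 m', isMean_average hm' _ _, average_comm (Commute.all _ _) _ _ _⟩

theorem isAmenable_of_commGroup (G : Type*) [CommGroup G] : IsAmenable G := by
  obtain ⟨m, hm, hfixed⟩ := (isCompact_setOf_isMean G).inter_iInter_nonempty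
    (fun p : G × ℕ => average p.1 p.2 '' {m | IsMean m})
    (fun p => ((isCompact_setOf_isMean G).image (continuous_average p.1 p.2)).isClosed)
    fun u => let ⟨m, hm, hmu⟩ := exists_isMean_forall_mem_image_average u
      ⟨m, hm, mem_iInter₂.2 hmu⟩
  refine isAmenable_iff.2 ⟨m, hm, fun g A => ?_⟩
  have hclose : ∀ n : ℕ, |m (g • A) - m A| ≤ 1 / (n + 1) := fun n => by
    obtain ⟨m', hm', rfl⟩ := mem_iInter.1 hfixed (g, n)
    exact abs_average_smul_sub_le hm' g n A
  exact sub_eq_zero.1 <| abs_nonpos_iff.1 <|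
    ge_of_tendsto' tendsto_one_div_add_atTop_nhds_zero_nat hclose

open scoped commutatorElement in
theorem isAmenable_of_derivedSeries_eq_bot {G : Type*} [Group G] {n : ℕ}
    (hn : derivedSeries G n = ⊥) : IsAmenable G := by
  induction n generalizing G with
  | zero =>
    rw [derivedSeries_zero] at hn
    have htrivial : ∀ a : G, a = 1 := fun a => Subgroup.mem_bot.1 (hn ▸ Subgroup.mem_top a)
    let _ : CommGroup G := { mul_comm := fun a b => by rw [htrivial a, htrivial b] }
    exact isAmenable_of_commGroup G
  | succ n ih =>
    set H := derivedSeries G n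
    have hcomm : ∀ a b : H, a * b = b * a := fun a b => by
      have hab : ⁅(a : G), (b : G)⁆ ∈ derivedSeries G (n + 1) :=
        Subgroup.commutator_mem_commutator a.2 b.2
      rw [hn, Subgroup.mem_bot, commutatorElement_eq_one_iff_mul_comm] at hab
      exact Subtype.ext hab
    let _ : CommGroup H := { mul_comm := hcomm }
    refine isAmenable_of_extension H (isAmenable_of_commGroup H) (ih ?_)
    rw [← map_derivedSeries_eq (QuotientGroup.mk'_surjective H), Subgroup.map_eq_bot_iff,
      QuotientGroup.ker_mk']

theorem isAmenable_quotient_map_derivedSeries {G : Type*} [Group G] (N : Subgroup G)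
    [N.Normal] (hQ : IsAmenable (G ⧸ N)) (n : ℕ) :
    IsAmenable (G ⧸ (derivedSeries N n).map N.subtype) := by
  set D := (derivedSeries N n).map N.subtype
  set N' := N.map (QuotientGroup.mk' D)
  have : N'.Normal := Subgroup.Normal.map inferInstance _ (QuotientGroup.mk'_surjective D)
  refine isAmenable_of_extension N' (isAmenable_of_derivedSeries_eq_bot (n := n) ?_)
    (hQ.of_surjective (f := (QuotientGroup.quotientQuotientEquivQuotient D N
      (Subgroup.map_subtype_le _)).symm.toMonoidHom) (MulEquiv.surjective _))
  rw [← map_derivedSeries_eq ((QuotientGroup.mk' D).subgroupMap_surjective N),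
    Subgroup.map_eq_bot_iff]
  exact fun x hx => Subtype.ext ((QuotientGroup.eq_one_iff _).2 (Subgroup.mem_map_of_mem _ hx))

theorem Residually.exists_notMem_derivedSeries {H : Type*} [Group H]
    (hH : Residually solvableClass H) {h : H} (hh : h ≠ 1) : ∃ n, h ∉ derivedSeries H n := by
  obtain ⟨Q, φ, -, hQ, hφ⟩ := hH h hh
  obtain ⟨n, hn⟩ := (hQ : Group.IsSolvable Q).solvable
  refine ⟨n, fun hmem => hφ ?_⟩
  simpa [hn] using map_derivedSeries_le_derivedSeries φ n (Subgroup.mem_map_of_mem φ hmem)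

theorem exists_surjective_apply_ne_one_of_notMem {C : GroupClass} {G : Type} [Group G]
    {M : Subgroup G} [M.Normal] (hM : C (G ⧸ M)) {g : G} (hg : g ∉ M) :
    ∃ (Q : GrpCat.{0}) (φ : G →* Q), Function.Surjective φ ∧ C Q ∧ φ g ≠ 1 :=
  ⟨GrpCat.of (G ⧸ M), QuotientGroup.mk' M, QuotientGroup.mk'_surjective M, hM,
    by simpa [QuotientGroup.eq_one_iff] using hg⟩

/-- Every (residually solvable)-by-amenable group is residually amenable. -/
theorem residuallyAmenable_of_residuallySolvable_by_amenable
    (G : Type) [Group G] (N : Subgroup G) [N.Normal]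
    (hN : Residually solvableClass N) (hQ : IsAmenable (G ⧸ N)) :
    Residually amenableClass G := by
  intro g hg
  by_cases hgN : g ∈ N
  · obtain ⟨n, hn⟩ := hN.exists_notMem_derivedSeries (h := ⟨g, hgN⟩) (Subtype.coe_ne_coe.1 hg)
    exact exists_surjective_apply_ne_one_of_notMem (C := amenableClass)
      (isAmenable_quotient_map_derivedSeries N hQ n)
      ((Subgroup.mem_map_iff_mem N.subtype_injective).not.2 hn)
  · exact exists_surjective_apply_ne_one_of_notMem (C := amenableClass) hQ hgN
end

section
/- Let C be a class of groups closed under free products. Then the free product of two LE-C groups is LE-C. -/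
/-- `φ` is a `K`-almost-homomorphism: multiplicative on `K` and injective on `K`. -/
def KAlmostHom {G C : Type*} [Group G] [Group C] (K : Set G) (φ : G → C) : Prop :=
  (∀ k₁ ∈ K, ∀ k₂ ∈ K, φ (k₁ * k₂) = φ k₁ * φ k₂) ∧ Set.InjOn φ K

/-- `G` is locally embeddable into the class `C` (`G` is LE-`C`) if every finite subset
of `G` admits an almost-homomorphism into some group of `C`. -/
def LEClass (C : GroupClass) (G : Type*) [Group G] : Prop :=
  ∀ K : Finset G, ∃ (Q : GrpCat.{0}) (φ : G → Q), C Q ∧ KAlmostHom (K : Set G) φ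


/-! Write the elements of `K` in normal form and let `Fⱼ ⊆ Gⱼ` be the set of letters that occur.
Choose almost-homomorphisms `φⱼ : Gⱼ → Qⱼ` on `{1} ∪ Fⱼ ∪ Fⱼ Fⱼ` and apply them letter by letter
to normal forms, landing in the free product of `Q₁` and `Q₂`. Reducing the concatenation of
two normal forms of elements of `K` only cancels or merges letters at the junction, and each such
step multiplies two letters of the same `Fⱼ`; hence the letterwise map is multiplicative on `K`.
As `φⱼ` is injective on `{1} ∪ Fⱼ`, distinct normal forms of elements of `K` go to distinct
normal forms. -/

open Monoid Pointwise

namespace KAlmostHom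

variable {G H : Type*} [Group G] [Group H] {K : Set G} {φ : G → H}

theorem map_one (hφ : KAlmostHom K φ) (h1 : (1 : G) ∈ K) : φ 1 = 1 := by
  simpa using hφ.1 1 h1 1 h1

theorem comp_mulEquiv {G' : Type*} [Group G'] {K' : Set G'} (e : G' ≃* G)
    (hφ : KAlmostHom (e '' K') φ) : KAlmostHom K' (φ ∘ ⇑e) :=
  ⟨fun a ha b hb => by simpa using hφ.1 (e a) ⟨a, ha, rfl⟩ (e b) ⟨b, hb, rfl⟩,
    hφ.2.comp e.injective.injOn (Set.mapsTo_image e K')⟩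

theorem comp_injective {H' F : Type*} [Group H'] [FunLike F H H'] [MulHomClass F H H']
    (hφ : KAlmostHom K φ) {f : F} (hf : Function.Injective f) : KAlmostHom K (f ∘ φ) :=
  ⟨fun a ha b hb => by simp [hφ.1 a ha b hb], hf.comp_injOn hφ.2⟩

end KAlmostHom

theorem LEClass.exists_kAlmostHom_of_finite {C : GroupClass} {G : Type*} [Group G]
    (hG : LEClass C G) {K : Set G} (hK : K.Finite) :
    ∃ (Q : GrpCat.{0}) (φ : G → Q), C Q ∧ KAlmostHom K φ := by
  simpa using hG hK.toFinset

theorem List.map_injOn {α β : Type*} {f : α → β} {s : Set α} (hf : s.InjOn f) :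
    {l : List α | ∀ x ∈ l, x ∈ s}.InjOn (List.map f) := by
  intro l₁ (h₁ : ∀ x ∈ l₁, x ∈ s) l₂ (h₂ : ∀ x ∈ l₂, x ∈ s) h
  induction l₁ generalizing l₂ with
  | nil => exact (List.map_eq_nil_iff.mp h.symm).symm
  | cons a l₁ ih =>
    cases l₂ with
    | nil => simp at h
    | cons b l₂ =>
      simp only [List.forall_mem_cons] at h₁ h₂
      simp only [List.map_cons, List.cons.injEq] at h
      rw [hf h₁.1 h₂.1 h.1, ih h₁.2 h₂.2 h.2]

namespace Monoid.CoprodI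

variable {ι : Type*} {M N : ι → Type*}

def mapLetters (φ : ∀ i, M i → N i) (w : List (Σ i, M i)) : List (Σ i, N i) :=
  w.map fun p => ⟨p.1, φ p.1 p.2⟩

@[simp] theorem mapLetters_nil (φ : ∀ i, M i → N i) : mapLetters φ [] = [] := rfl

@[simp] theorem mapLetters_cons (φ : ∀ i, M i → N i) (i : ι) (a : M i) (w : List (Σ i, M i)) :
    mapLetters φ (⟨i, a⟩ :: w) = ⟨i, φ i a⟩ :: mapLetters φ w := rfl

@[simp] theorem mapLetters_append (φ : ∀ i, M i → N i) (u v : List (Σ i, M i)) :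
    mapLetters φ (u ++ v) = mapLetters φ u ++ mapLetters φ v := List.map_append

theorem mapLetters_injOn {φ : ∀ i, M i → N i} {F : ∀ i, Set (M i)}
    (hφ : ∀ i, Set.InjOn (φ i) (F i)) :
    {u : List (Σ i, M i) | ∀ p ∈ u, p.2 ∈ F p.1}.InjOn (mapLetters φ) := by
  refine List.map_injOn ?_
  rintro ⟨i, a⟩ ha ⟨j, b⟩ hb h
  simp only [Sigma.mk.inj_iff] at h
  obtain ⟨rfl, h⟩ := h
  exact congrArg (Sigma.mk i) (hφ i ha hb (eq_of_heq h))

variable [∀ i, Group (M i)] [∀ i, Group (N i)]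

def listProd (w : List (Σ i, M i)) : CoprodI M := (w.map fun p => of p.2).prod

@[simp] theorem listProd_nil : listProd ([] : List (Σ i, M i)) = 1 := rfl

@[simp] theorem listProd_cons (i : ι) (a : M i) (w : List (Σ i, M i)) :
    listProd (⟨i, a⟩ :: w) = of a * listProd w := List.prod_cons

@[simp] theorem listProd_append (u v : List (Σ i, M i)) :
    listProd (u ++ v) = listProd u * listProd v := by
  simp [listProd]

def IsReduced (w : List (Σ i, M i)) : Prop :=
  (∀ p ∈ w, p.2 ≠ 1) ∧ w.IsChain fun p q => p.1 ≠ q.1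

theorem isReduced_append {u v : List (Σ i, M i)} :
    IsReduced (u ++ v) ↔
      IsReduced u ∧ IsReduced v ∧ ∀ p ∈ u.getLast?, ∀ q ∈ v.head?, p.1 ≠ q.1 := by
  simp only [IsReduced, List.isChain_append, List.forall_mem_append]
  tauto

theorem isReduced_cons {p : Σ i, M i} {w : List (Σ i, M i)} :
    IsReduced (p :: w) ↔ p.2 ≠ 1 ∧ IsReduced w ∧ ∀ q ∈ w.head?, p.1 ≠ q.1 := by
  simp only [IsReduced, List.isChain_cons, List.forall_mem_cons]
  tauto

theorem Word.isReduced (w : Word M) : IsReduced w.toList := ⟨w.ne_one, w.chain_ne⟩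

theorem listProd_toList_equiv [DecidableEq ι] [∀ i, DecidableEq (M i)] (x : CoprodI M) :
    listProd (Word.equiv x).toList = x :=
  Word.equiv.symm_apply_apply x

theorem listProd_injOn : {w : List (Σ i, M i) | IsReduced w}.InjOn listProd := by
  classical
  intro u hu v hv h
  exact congrArg Word.toList
    (Word.equiv.symm.injective (a₁ := ⟨u, hu.1, hu.2⟩) (a₂ := ⟨v, hv.1, hv.2⟩) h)

variable {φ : ∀ i, M i → N i} {F : ∀ i, Set (M i)}

theorem exists_isReduced_listProd_mul (hφ1 : ∀ i, φ i 1 = 1)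
    (hφ : ∀ i, ∀ a ∈ F i, ∀ b ∈ F i, φ i (a * b) = φ i a * φ i b) {u v : List (Σ i, M i)}
    (hu : IsReduced u) (hv : IsReduced v) (huF : ∀ p ∈ u, p.2 ∈ F p.1)
    (hvF : ∀ p ∈ v, p.2 ∈ F p.1) :
    ∃ w, IsReduced w ∧ listProd w = listProd u * listProd v ∧
      listProd (mapLetters φ w) = listProd (mapLetters φ u) * listProd (mapLetters φ v) := by
  induction u using List.reverseRecOn generalizing v with
  | nil => exact ⟨v, hv, by simp, by simp⟩
  | append_singleton u p ih =>
    obtain ⟨hu', ⟨hp1, -⟩, hup⟩ := isReduced_append.mp hu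
    obtain ⟨i, a⟩ := p
    have ha : a ∈ F i := huF ⟨i, a⟩ (by simp)
    match v, hv, hvF with
    | [], _, _ => exact ⟨u ++ [⟨i, a⟩], hu, by simp, by simp⟩
    | ⟨j, b⟩ :: v, hv, hvF =>
      have hb : b ∈ F j := hvF ⟨j, b⟩ (by simp)
      obtain ⟨hb1, hv', hbv⟩ := isReduced_cons.mp hv
      by_cases hij : i = j
      · subst hij
        by_cases hab : a * b = 1
        · obtain ⟨w, hw, hwu, hwφ⟩ := ih hu' hv' (fun p hp => huF p (by simp [hp]))
            (fun p hp => hvF p (by simp [hp]))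
          have hφab : φ i a * φ i b = 1 := by rw [← hφ i a ha b hb, hab, hφ1]
          refine ⟨w, hw, ?_, ?_⟩
          · simp [hwu, mul_assoc, ← mul_assoc (of a), ← map_mul, hab]
          · simp [hwφ, mul_assoc, ← mul_assoc (of (φ i a)), ← map_mul, hφab]
        · refine ⟨u ++ ⟨i, a * b⟩ :: v, ?_, ?_, ?_⟩
          · exact isReduced_append.mpr
              ⟨hu', isReduced_cons.mpr ⟨hab, hv', hbv⟩, fun q hq _ h => by
                obtain rfl := Option.mem_some_iff.mp h
                exact hup q hq ⟨i, a⟩ rfl⟩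
          · simp [mul_assoc]
          · simp [hφ i a ha b hb, mul_assoc]
      · refine ⟨u ++ ⟨i, a⟩ :: ⟨j, b⟩ :: v, ?_, by simp [mul_assoc], by simp [mul_assoc]⟩
        simpa using isReduced_append.mpr ⟨hu, hv, by simpa using hij⟩

theorem isReduced_mapLetters (hφ1 : ∀ i, φ i 1 = 1) (hφ : ∀ i, Set.InjOn (φ i) (insert 1 (F i)))
    {u : List (Σ i, M i)} (hu : IsReduced u) (huF : ∀ p ∈ u, p.2 ∈ F p.1) :
    IsReduced (mapLetters φ u) := by
  refine ⟨?_, List.isChain_map_of_isChain (fun (p : Σ i, M i) => (⟨p.1, φ p.1 p.2⟩ : Σ i, N i))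
    (fun _ _ h => h) hu.2⟩
  simp only [mapLetters, List.mem_map]
  rintro _ ⟨p, hp, rfl⟩ h
  exact hu.1 p hp <| hφ p.1 (Set.mem_insert_of_mem _ (huF p hp)) (Set.mem_insert 1 _)
    (h.trans (hφ1 p.1).symm)

variable [DecidableEq ι] [∀ i, DecidableEq (M i)]

def letterwiseMap (φ : ∀ i, M i → N i) (x : CoprodI M) : CoprodI N :=
  listProd (mapLetters φ (Word.equiv x).toList)

def letters (K : Set (CoprodI M)) (i : ι) : Set (M i) :=
  {a | ∃ x ∈ K, ⟨i, a⟩ ∈ (Word.equiv x).toList}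

theorem letters_finite {K : Set (CoprodI M)} (hK : K.Finite) (i : ι) : (letters K i).Finite := by
  have : (⋃ x ∈ K, {p | p ∈ (Word.equiv x).toList}).Finite :=
    hK.biUnion fun x _ => (Word.equiv x).toList.finite_toSet
  refine (this.preimage sigma_mk_injective.injOn).subset ?_
  rintro a ⟨x, hx, ha⟩
  exact Set.mem_biUnion hx ha

theorem kAlmostHom_letterwiseMap {K : Set (CoprodI M)}
    (hφ : ∀ i, KAlmostHom (insert 1 (letters K i ∪ letters K i * letters K i)) (φ i)) :
    KAlmostHom K (letterwiseMap φ) := by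
  have hφ1 i : φ i 1 = 1 := (hφ i).map_one (Set.mem_insert 1 _)
  have hK : ∀ x ∈ K, ∀ p ∈ (Word.equiv x).toList, p.2 ∈ letters K p.1 :=
    fun x hx p hp => ⟨x, hx, hp⟩
  constructor
  · intro x hx y hy
    obtain ⟨w, hw, hwxy, hwφ⟩ := exists_isReduced_listProd_mul hφ1
      (fun i a ha b hb => (hφ i).1 a (by simp [ha]) b (by simp [hb]))
      (Word.isReduced _) (Word.isReduced _) (hK x hx) (hK y hy)
    have hxy : (Word.equiv (x * y)).toList = w :=
      listProd_injOn (Word.isReduced _) hw (by simp only [listProd_toList_equiv, hwxy])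
    rw [letterwiseMap, hxy, hwφ]
    rfl
  · intro x hx y hy hxy
    have hinj i : Set.InjOn (φ i) (insert 1 (letters K i)) :=
      (hφ i).2.mono (Set.insert_subset_insert Set.subset_union_left)
    have := listProd_injOn (isReduced_mapLetters hφ1 hinj (Word.isReduced _) (hK x hx))
      (isReduced_mapLetters hφ1 hinj (Word.isReduced _) (hK y hy)) hxy
    exact Word.equiv.injective <| Word.ext <|
      mapLetters_injOn (fun i => (hinj i).mono (Set.subset_insert 1 _)) (hK x hx) (hK y hy) this

end Monoid.CoprodI

namespace Monoid.Coprod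

universe u

variable (A B : Type u) [Group A] [Group B]

def pairFamily : Bool → Type u
  | true => A
  | false => B

instance : ∀ b, Group (pairFamily A B b)
  | true => ‹Group A›
  | false => ‹Group B›

/-- Normal forms (`Monoid.CoprodI.Word`) are only available for indexed free products. -/
def mulEquivCoprodI : Coprod A B ≃* CoprodI (pairFamily A B) :=
  MonoidHom.toMulEquiv
    (lift (CoprodI.of (M := pairFamily A B) (i := true))
      (CoprodI.of (M := pairFamily A B) (i := false)))
    (CoprodI.lift fun | true => inl | false => inr)
    (by ext <;> rfl)
    (by ext (_ | _) <;> rfl)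

end Monoid.Coprod

/-- If a class of groups `C` is closed under free products, then the free product of two
LE-`C` groups is LE-`C`. -/
theorem freeProduct_LE_of_closed_under_freeProducts (C : GroupClass)
    (hfp : ∀ (A B : Type) [Group A] [Group B], C A → C B → C (Monoid.Coprod A B))
    (G₁ G₂ : Type) [Group G₁] [Group G₂]
    (h₁ : LEClass C G₁) (h₂ : LEClass C G₂) :
    LEClass C (Monoid.Coprod G₁ G₂) := by
  classical
  intro K
  set e := Coprod.mulEquivCoprodI G₁ G₂
  set F := CoprodI.letters (e '' K)
  have hF b : (insert 1 (F b ∪ F b * F b)).Finite :=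
    have hFb := CoprodI.letters_finite (K.finite_toSet.image e) b
    (hFb.union (hFb.mul hFb)).insert 1
  obtain ⟨Q₁, φ₁, hC₁, hφ₁⟩ := h₁.exists_kAlmostHom_of_finite (hF true)
  obtain ⟨Q₂, φ₂, hC₂, hφ₂⟩ := h₂.exists_kAlmostHom_of_finite (hF false)
  let φ : ∀ b, Coprod.pairFamily G₁ G₂ b → Coprod.pairFamily Q₁ Q₂ b
    | true => φ₁
    | false => φ₂
  refine ⟨GrpCat.of (Coprod Q₁ Q₂),
    (Coprod.mulEquivCoprodI Q₁ Q₂).symm ∘ CoprodI.letterwiseMap φ ∘ e, hfp _ _ hC₁ hC₂, ?_⟩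
  exact ((CoprodI.kAlmostHom_letterwiseMap (Bool.forall_bool.mpr ⟨hφ₂, hφ₁⟩)).comp_mulEquiv
    e).comp_injective (Coprod.mulEquivCoprodI Q₁ Q₂).symm.injective
end
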